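/- arXiv:1605.01230 — 3 statements merged into one kernel-verified Lean document; each statement's English description precedes it below -/
import Mathlib

section
/- For a structure (D, ⊕, *, 0, {r : r ∈ [0,1]∩ℚ}) with MV-algebra reduct, the axioms (DMV1') r(x ⊙ y*) = (rx) ⊙ (ry)*, (DMV2') (r ⊙ q*)x = (rx) ⊙ (qx)*, (DMV3') r(qx) = (rq)x, (DMV4') 1x = x (for all x, y ∈ D, r, q ∈ [0,1]∩ℚ) are equivalent to the DMV-algebra axioms: there exist unary operations δ_n (n ≥ 1) with nδ_n x = x and δ_n x ⊙ (n−1)δ_n x = 0, where the correspondence is given by δ_n x = (1/n)x. In particular, (DMV1')–(DMV4') is an equivalent axiomatization of DMV-algebras. -/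
/-- An MV-algebra: an abelian monoid `(A, ⊕, 0)` with an involution `*` satisfying
the Łukasiewicz axioms. -/
class MVAlgebra (A : Type) where
  oplus : A → A → A
  star : A → A
  zero : A
  oplus_assoc : ∀ x y z : A, oplus (oplus x y) z = oplus x (oplus y z)
  oplus_comm : ∀ x y : A, oplus x y = oplus y x
  oplus_zero : ∀ x : A, oplus x zero = x
  star_star : ∀ x : A, star (star x) = x
  lukasiewicz : ∀ x y : A,
    oplus (star (oplus (star x) y)) y = oplus (star (oplus (star y) x)) x
  oplus_star_zero : ∀ x : A, oplus (star zero) x = star zero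

namespace MVAlgebra

variable {A : Type} [MVAlgebra A]

/-- The top element `1 = 0*`. -/
def one : A := star zero

/-- The MV-product `x ⊙ y = (x* ⊕ y*)*`. -/
def odot (x y : A) : A := star (oplus (star x) (star y))

/-- `n`-fold ⊕-sum of an element. -/
def nmul : ℕ → A → A
  | 0, _ => zero
  | n + 1, x => oplus (nmul n x) x

/-- The lattice join `x ∨ y = (x ⊙ y*) ⊕ y`. -/
def sup (x y : A) : A := oplus (odot x (star y)) y

/-- The lattice meet `x ∧ y = (x ⊕ y*) ⊙ y`. -/
def inf (x y : A) : A := odot (oplus x (star y)) y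

/-- The MV-order: `x ≤ y` iff `x ⊙ y* = 0`. -/
def le (x y : A) : Prop := odot x (star y) = zero

end MVAlgebra

/-- The rational unit interval `[0,1] ∩ ℚ`. -/
def QI : Type := {q : ℚ // 0 ≤ q ∧ q ≤ 1}

namespace QI

/-- Truncated addition on `[0,1] ∩ ℚ`. -/
def oplus (r s : QI) : QI :=
  ⟨min (r.1 + s.1) 1, le_min (add_nonneg r.2.1 s.2.1) zero_le_one, min_le_right _ _⟩

/-- Negation `r* = 1 - r` on `[0,1] ∩ ℚ`. -/
def star (r : QI) : QI :=
  ⟨1 - r.1, by constructor <;> [linarith [r.2.2]; linarith [r.2.1]]⟩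

def zero : QI := ⟨0, le_refl 0, zero_le_one⟩

def one : QI := ⟨1, zero_le_one, le_refl 1⟩

/-- Ordinary multiplication of rationals, restricted to `[0,1] ∩ ℚ`. -/
def mul (r s : QI) : QI :=
  ⟨r.1 * s.1, mul_nonneg r.2.1 s.2.1, by nlinarith [r.2.1, r.2.2, s.2.1, s.2.2]⟩

/-- The MV-product `r ⊙ s = (r* ⊕ s*)*` on `[0,1] ∩ ℚ`. -/
def odot (r s : QI) : QI := star (oplus (star r) (star s))

/-- Division by a natural number in `[0,1] ∩ ℚ`. -/
def div (r : QI) (n : ℕ) : QI :=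
  ⟨r.1 / n, div_nonneg r.2.1 (Nat.cast_nonneg n), by
    rcases Nat.eq_zero_or_pos n with h | h
    · simp [h]
    · exact le_trans (div_le_self r.2.1 (by exact_mod_cast h)) r.2.2⟩

/-- `1/n` as an element of `[0,1] ∩ ℚ` (with `1/0 = 0`). -/
def oneOver (n : ℕ) : QI := div one n

/-- Join (maximum) in `[0,1] ∩ ℚ`. -/
def sup (r s : QI) : QI :=
  ⟨max r.1 s.1, le_max_of_le_left r.2.1, max_le r.2.2 s.2.2⟩

/-- Meet (minimum) in `[0,1] ∩ ℚ`. -/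
def inf (r s : QI) : QI :=
  ⟨min r.1 s.1, le_min r.2.1 s.2.1, min_le_of_left_le r.2.2⟩

end QI

/-!
Ordering an MV-algebra by `x ≤ y ↔ x ⊙ y* = 0` and taking `x ⊖ y = x ⊙ y*` as the truncated
subtraction `x - y` makes `(A, ⊕, 0)` a canonically ordered commutative monoid with an ordered
subtraction, so the general theory of `tsub` applies.

From scalars `s`, (DMV2') gives `s ((k+1)/n) x = s (1/n) x ⊕ s (k/n) x`, so `δ_n x = s (1/n) x`
satisfies `n δ_n x = s 1 x = x`, and `δ_n x = x ⊖ s ((n-1)/n) x` is orthogonal to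
`(n-1) δ_n x = s ((n-1)/n) x`.

Conversely, say that `y` fits `n` times if `y ⊙ (n-1) y = 0`. For `u, v` fitting `n` times and
`k ≤ n` one has `k (u ⊖ v) = k u ⊖ k v`: split `u` and `v` along `u ∧ v` and use
`(u ⊖ v) ∧ (v ⊖ u) = 0`. Hence such a `y` is determined by `n y`, so `δ_n x` is the unique
solution of `n y = x` fitting `n` times. Then `(p/d) x = p δ_d x` does not depend on the
representation of `p/d`, and (DMV1')–(DMV4') reduce to arithmetic of numerators over a common
denominator.
-/

lemma Nat.cast_tsub_div_eq_max (a b c : ℕ) :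
    ((a - b : ℕ) : ℚ) / c = max ((a : ℚ) / c - b / c) 0 := by
  rcases le_total a b with hab | hba
  · rw [Nat.sub_eq_zero_of_le hab, Nat.cast_zero, zero_div, eq_comm, max_eq_right_iff,
      sub_nonpos]
    gcongr
  · rw [Nat.cast_sub hba, sub_div, eq_comm, max_eq_left_iff, sub_nonneg]
    gcongr

namespace QI

lemma val_odot_star (r q : QI) : (QI.odot r (QI.star q)).1 = max (r.1 - q.1) 0 := by
  show 1 - min (1 - r.1 + (1 - (1 - q.1))) 1 = max (r.1 - q.1) 0
  rw [min_def, max_def]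
  split_ifs <;> linarith

lemma num_toNat_div_den (r : QI) : ((r.1.num.toNat : ℕ) : ℚ) / r.1.den = r.1 := by
  have hnum : ((r.1.num.toNat : ℕ) : ℚ) = r.1.num := by
    exact_mod_cast Int.toNat_of_nonneg (Rat.num_nonneg.2 r.2.1)
  rw [hnum, Rat.num_div_den]

lemma exists_div (r : QI) : ∃ p d : ℕ, 1 ≤ d ∧ p ≤ d ∧ (p : ℚ) / d = r.1 := by
  refine ⟨r.1.num.toNat, r.1.den, r.1.pos, ?_, r.num_toNat_div_den⟩
  have hd : (0 : ℚ) < r.1.den := by exact_mod_cast r.1.pos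
  exact_mod_cast (div_le_one hd).1 (r.num_toNat_div_den.trans_le r.2.2)

def frac (k n : ℕ) : QI :=
  ⟨min ((k : ℚ) / n) 1, le_min (by positivity) zero_le_one, min_le_right _ _⟩

lemma val_frac {k n : ℕ} (h : k ≤ n) : (frac k n).1 = k / n :=
  min_eq_left (div_le_one_of_le₀ (by exact_mod_cast h) (Nat.cast_nonneg n))

lemma frac_odot_star_frac {i j n : ℕ} (hi : i ≤ n) (hj : j ≤ n) :
    QI.odot (frac i n) (QI.star (frac j n)) = frac (i - j) n := by
  apply Subtype.ext
  rw [val_odot_star, val_frac hi, val_frac hj, val_frac ((Nat.sub_le i j).trans hi),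
    Nat.cast_tsub_div_eq_max]

lemma frac_self {n : ℕ} (hn : 1 ≤ n) : frac n n = QI.one :=
  Subtype.ext <| (val_frac le_rfl).trans <| div_self (by positivity)

lemma frac_one (n : ℕ) : frac 1 n = QI.oneOver n :=
  Subtype.ext <| min_eq_left <| by rw [Nat.cast_one, one_div]; exact Nat.cast_inv_le_one n

end QI

namespace MVAlgebra

variable {A : Type} [MVAlgebra A]

lemma zero_oplus (x : A) : oplus zero x = x := by
  rw [oplus_comm, oplus_zero]

lemma one_oplus (x : A) : oplus one x = one := oplus_star_zero x

lemma star_one : star (one : A) = zero := star_star zero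

lemma star_oplus_self (x : A) : oplus (star x) x = one := by
  simpa [one_oplus, oplus_comm _ one, star_one, zero_oplus] using (lukasiewicz x one).symm

lemma odot_comm (x y : A) : odot x y = odot y x := by
  rw [odot, odot, oplus_comm]

lemma odot_assoc (x y z : A) : odot (odot x y) z = odot x (odot y z) := by
  simp only [odot, star_star, oplus_assoc]

lemma odot_star_self (x : A) : odot x (star x) = zero := by
  rw [odot, star_star, star_oplus_self, star_one]

lemma zero_odot (x : A) : odot zero x = zero := by
  rw [odot, ← one, one_oplus, star_one]

lemma odot_star_oplus (x y : A) : odot x (star (oplus x y)) = zero := by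
  have h : star (oplus x y) = odot (star x) (star y) := by rw [odot, star_star, star_star]
  rw [h, ← odot_assoc, odot_star_self, zero_odot]

instance : AddCommMonoid A where
  add := oplus
  zero := zero
  add_assoc := oplus_assoc
  zero_add := zero_oplus
  add_zero := oplus_zero
  add_comm := oplus_comm
  nsmul := nmul
  nsmul_zero _ := rfl
  nsmul_succ _ _ := rfl

instance : Sub A := ⟨fun x y => odot x (star y)⟩

lemma oplus_eq_add (x y : A) : oplus x y = x + y := rfl

lemma odot_star_eq_tsub (x y : A) : odot x (star y) = x - y := rfl

lemma odot_eq_tsub (x y : A) : odot x y = x - star y := by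
  rw [← odot_star_eq_tsub, star_star]

lemma star_add (x y : A) : star (x + y) = star x - y := by
  rw [← odot_star_eq_tsub, odot, star_star, star_star, oplus_eq_add]

lemma tsub_add_eq_tsub_add (x y : A) : x - y + y = y - x + x := by
  show oplus (odot x (star y)) y = oplus (odot y (star x)) x
  simpa only [odot, star_star] using lukasiewicz x y

lemma tsub_tsub_eq_tsub_add (x y z : A) : x - y - z = x - (z + y) := by
  show odot (odot x (star y)) (star z) = odot x (star (oplus z y))
  rw [odot_assoc]
  congr 1
  rw [odot, star_star, star_star, oplus_comm]

lemma tsub_self_add_eq_zero (x y : A) : x - (x + y) = 0 := odot_star_oplus x y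

lemma tsub_add_cancel_of_tsub_eq_zero {x y : A} (h : x - y = 0) : y - x + x = y := by
  rw [← tsub_add_eq_tsub_add, h, zero_add]

instance : PartialOrder A where
  le := le
  le_refl := odot_star_self
  le_trans a b c hab hbc := by
    have hc : a + (b - a) + (c - b) = c := by
      rw [add_comm a, tsub_add_cancel_of_tsub_eq_zero hab, add_comm,
        tsub_add_cancel_of_tsub_eq_zero hbc]
    show a - c = 0
    rw [← hc, add_assoc, tsub_self_add_eq_zero]
  le_antisymm a b hab hba := by
    change b - a = 0 at hba
    rw [← tsub_add_cancel_of_tsub_eq_zero hab, hba, zero_add]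

lemma le_iff_tsub_eq_zero {x y : A} : x ≤ y ↔ x - y = 0 := Iff.rfl

instance : CanonicallyOrderedAdd A where
  exists_add_of_le {a b} h := ⟨b - a, by rw [add_comm, tsub_add_cancel_of_tsub_eq_zero h]⟩
  le_self_add := tsub_self_add_eq_zero
  le_add_self a b := by
    rw [add_comm]
    exact tsub_self_add_eq_zero a b

instance : IsOrderedAddMonoid A where
  add_le_add_left a b h c := by
    obtain ⟨d, rfl⟩ := exists_add_of_le h
    rw [add_right_comm]
    exact le_self_add

instance : OrderedSub A where
  tsub_le_iff_right a b c := by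
    rw [le_iff_tsub_eq_zero, le_iff_tsub_eq_zero, tsub_tsub_eq_tsub_add]

lemma star_le_star_iff {x y : A} : star x ≤ star y ↔ y ≤ x := by
  rw [le_iff_tsub_eq_zero, le_iff_tsub_eq_zero, ← odot_star_eq_tsub, ← odot_star_eq_tsub,
    star_star, odot_comm]

lemma le_star_iff_odot_eq_zero {x y : A} : x ≤ star y ↔ odot x y = 0 := by
  rw [odot_eq_tsub, le_iff_tsub_eq_zero]

instance : SemilatticeSup A where
  sup := sup
  le_sup_left _ _ := le_tsub_add
  le_sup_right _ _ := le_add_self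
  sup_le x y z hxz hyz := by
    calc x - y + y ≤ z - y + y := add_le_add_left (tsub_le_tsub_right hxz y) y
      _ = z := tsub_add_cancel_of_le hyz

lemma sup_eq_tsub_add (x y : A) : x ⊔ y = x - y + y := rfl

lemma star_inf (x y : A) : star (inf x y) = star x ⊔ star y := by
  rw [sup_eq_tsub_add, inf, odot, star_star, oplus_eq_add x, star_add, oplus_eq_add]

instance : Lattice A where
  inf := inf
  inf_le_left x y := by rw [← star_le_star_iff, star_inf]; exact le_sup_left
  inf_le_right x y := by rw [← star_le_star_iff, star_inf]; exact le_sup_right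
  le_inf x y z hzx hzy := by
    rw [← star_le_star_iff, star_inf]
    exact sup_le (star_le_star_iff.2 hzx) (star_le_star_iff.2 hzy)

lemma star_tsub (x y : A) : star (x - y) = star x + y := by
  rw [← odot_star_eq_tsub, odot, star_star, star_star, oplus_eq_add]

lemma le_star_comm {x y : A} : x ≤ star y ↔ y ≤ star x := by
  rw [← star_le_star_iff, star_star]

lemma le_star_zero (x : A) : x ≤ star 0 := by
  rw [le_star_iff_odot_eq_zero, odot_comm]
  exact zero_odot x

lemma tsub_le_star (x y : A) : x - y ≤ star y := by
  rw [tsub_le_iff_right, ← oplus_eq_add, star_oplus_self]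
  exact le_star_zero x

lemma inf_eq_add_star_tsub (x y : A) : x ⊓ y = x + star y - star y := by
  rw [← odot_eq_tsub]
  rfl

lemma inf_eq_tsub_tsub (x y : A) : x ⊓ y = x - (x - y) := by
  rw [inf_comm, inf_eq_add_star_tsub, ← odot_eq_tsub, odot_comm, odot_eq_tsub, star_add,
    ← odot_eq_tsub, odot_comm, odot_star_eq_tsub]

lemma tsub_inf_self (x y : A) : x - x ⊓ y = x - y := by
  rw [inf_eq_tsub_tsub, ← inf_eq_tsub_tsub, inf_eq_right.2 tsub_le_self]

lemma add_tsub_cancel_of_le_star {x y : A} (h : x ≤ star y) : x + y - y = x := by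
  calc x + y - y = x ⊓ star y := by rw [inf_eq_add_star_tsub, star_star]
    _ = x := inf_eq_left.2 h

lemma le_star_add_of_le_star {x y z : A} (hxy : x ≤ star y) (h : x + y ≤ star z) :
    x ≤ star (y + z) := by
  calc x = x + y - y := (add_tsub_cancel_of_le_star hxy).symm
    _ ≤ star z - y := tsub_le_tsub_right h y
    _ = star (y + z) := by rw [add_comm, star_add]

lemma tsub_inf_tsub_eq_zero (x y : A) : (x - y) ⊓ (y - x) = 0 := by
  have key : x - y + star (y - x) - star y ≤ x :=
    calc x - y + star (y - x) - star y ≤ x - y + (star (y - x) - star y) := add_tsub_le_assoc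
      _ = x - y + x ⊓ y := by rw [star_tsub, add_comm (star y), inf_eq_add_star_tsub]
      _ = x := by rw [inf_eq_tsub_tsub, add_tsub_cancel_of_le tsub_le_self]
  refine nonpos_iff_eq_zero.1 ?_
  calc (x - y) ⊓ (y - x) = x - y + star (y - x) - star y - x := by
        rw [inf_eq_add_star_tsub, tsub_tsub, ← star_tsub]
    _ ≤ x - x := tsub_le_tsub_right key x
    _ = 0 := tsub_self x

lemma inf_nsmul_eq_zero {x y : A} (h : x ⊓ y = 0) : ∀ k : ℕ, x ⊓ k • y = 0
  | 0 => by rw [zero_nsmul]; exact nonpos_iff_eq_zero.1 inf_le_right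
  | k + 1 => by
    set z := x ⊓ (k + 1) • y
    have hz : z - k • y ≤ x ⊓ y := by
      refine le_inf (tsub_le_self.trans inf_le_left) ((tsub_le_tsub_right inf_le_right _).trans ?_)
      rw [succ_nsmul']
      exact add_tsub_le_right
    rw [h, nonpos_iff_eq_zero, tsub_eq_zero_iff_le] at hz
    have hzk : z ≤ x ⊓ k • y := le_inf inf_le_left hz
    rwa [inf_nsmul_eq_zero h k, nonpos_iff_eq_zero] at hzk

/-- In `[0,1]` this says `x ≤ 1/n`. -/
def FitsTimes (n : ℕ) (x : A) : Prop := odot x ((n - 1) • x) = 0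

namespace FitsTimes

variable {q : ℕ} {x y : A}

lemma le_star (hx : FitsTimes q x) : x ≤ star ((q - 1) • x) :=
  le_star_iff_odot_eq_zero.2 hx

lemma of_le_star (h : x ≤ star ((q - 1) • x)) : FitsTimes q x :=
  le_star_iff_odot_eq_zero.1 h

lemma mono (hy : FitsTimes q y) (h : x ≤ y) : FitsTimes q x :=
  of_le_star <| h.trans <| hy.le_star.trans <| star_le_star_iff.2 <| nsmul_le_nsmul_right h _

lemma nsmul_le_star_nsmul (hx : FitsTimes q x) :
    ∀ {i j : ℕ}, i + j ≤ q → i • x ≤ star (j • x)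
  | 0, _, _ => by rw [zero_nsmul]; exact zero_le
  | i + 1, j, h => by
    have hi : i • x ≤ star (j • x) - x := by
      rw [← star_add, ← succ_nsmul]
      exact hx.nsmul_le_star_nsmul (by omega)
    have hx' : x ≤ star (j • x) :=
      hx.le_star.trans <| star_le_star_iff.2 <| nsmul_le_nsmul_left zero_le (by omega)
    calc (i + 1) • x = i • x + x := succ_nsmul x i
      _ ≤ star (j • x) - x + x := add_le_add_left hi x
      _ = star (j • x) := tsub_add_cancel_of_le hx'

lemma nsmul {N j k : ℕ} (hy : FitsTimes N y) (hk : 1 ≤ k) (h : j * k ≤ N) :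
    FitsTimes k (j • y) := by
  refine of_le_star ?_
  rw [← mul_nsmul]
  refine hy.nsmul_le_star_nsmul (le_of_eq_of_le ?_ h)
  rw [add_comm, ← mul_add_one, Nat.sub_add_cancel hk]

lemma tsub_nsmul (hx : FitsTimes q x) {a b : ℕ} (ha : a ≤ q) :
    (a - b) • x = a • x - b • x := by
  rcases le_total a b with hab | hba
  · rw [Nat.sub_eq_zero_of_le hab, zero_nsmul, eq_comm, tsub_eq_zero_iff_le]
    exact nsmul_le_nsmul_left zero_le hab
  · rw [← Nat.sub_add_cancel hba, add_nsmul, Nat.add_sub_cancel]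
    exact (add_tsub_cancel_of_le_star (hx.nsmul_le_star_nsmul (by omega))).symm

lemma nsmul_le_star_nsmul_of_le_star {p r : A} (hw : FitsTimes q (p + r)) (hpr : p ≤ star r)
    {k : ℕ} (hk : k ≤ q) : k • p ≤ star (k • r) := by
  set w := p + r with hw_def
  have hstar_r : star r = star w + p := by
    rw [← star_tsub, hw_def, add_comm, add_tsub_cancel_of_le_star (le_star_comm.1 hpr)]
  suffices ∀ j ≤ k, k • p ≤ star (j • r) from this k le_rfl
  intro j
  induction j with
  | zero => intro _; rw [zero_nsmul]; exact le_star_zero _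
  | succ j ih =>
    intro hj
    rw [succ_nsmul]
    refine le_star_add_of_le_star (ih (by omega)) ?_
    have hsplit : k • p + j • r = (k - j - 1) • p + j • w + p := by
      conv_lhs => rw [show k = k - j - 1 + j + 1 by omega]
      rw [add_nsmul, add_nsmul, one_nsmul, nsmul_add]
      abel
    have hbound : (k - j - 1) • p + j • w ≤ star w :=
      calc (k - j - 1) • p + j • w ≤ (k - j - 1) • w + j • w :=
            add_le_add_left (nsmul_le_nsmul_right le_self_add _) _
        _ = (k - j - 1 + j) • w := (add_nsmul _ _ _).symm
        _ ≤ (q - 1) • w := nsmul_le_nsmul_left zero_le (by omega)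
        _ ≤ star w := le_star_comm.1 hw.le_star
    rw [hsplit, hstar_r]
    exact add_le_add_left hbound p

lemma nsmul_add_tsub {p r : A} (hw : FitsTimes q (p + r)) (hpr : p ≤ star r) {k : ℕ}
    (hk : k ≤ q) : k • (p + r) - k • r = k • p := by
  rw [nsmul_add, add_tsub_cancel_of_le_star (hw.nsmul_le_star_nsmul_of_le_star hpr hk)]

lemma nsmul_tsub (hx : FitsTimes q x) (hy : FitsTimes q y) {k : ℕ} (hk : k ≤ q) :
    k • (x - y) = k • x - k • y := by
  set w := x ⊓ y with hw
  have hx_eq : x - y + w = x := by rw [hw, inf_eq_tsub_tsub, add_tsub_cancel_of_le tsub_le_self]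
  have hy_eq : y - x + w = y := by
    rw [hw, inf_comm, inf_eq_tsub_tsub, add_tsub_cancel_of_le tsub_le_self]
  have hxw : x - y ≤ star w :=
    le_star_comm.1 (by rw [hw, inf_eq_tsub_tsub]; exact tsub_le_star _ _)
  have hyw : y - x ≤ star w :=
    le_star_comm.1 (by rw [hw, inf_comm, inf_eq_tsub_tsub]; exact tsub_le_star _ _)
  have hkx : k • x - k • w = k • (x - y) := by
    conv_lhs => rw [← hx_eq]
    exact nsmul_add_tsub (by rwa [hx_eq]) hxw hk
  have hky : k • y - k • w = k • (y - x) := by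
    conv_lhs => rw [← hy_eq]
    exact nsmul_add_tsub (by rwa [hy_eq]) hyw hk
  have hdisj : k • (x - y) ⊓ k • (y - x) = 0 := by
    refine inf_nsmul_eq_zero ?_ k
    rw [inf_comm]
    exact inf_nsmul_eq_zero (by rw [inf_comm]; exact tsub_inf_tsub_eq_zero x y) k
  have hinf : k • x ⊓ k • y = k • w := by
    refine le_antisymm ?_ (le_inf (nsmul_le_nsmul_right inf_le_left k)
      (nsmul_le_nsmul_right inf_le_right k))
    rw [← tsub_eq_zero_iff_le, ← nonpos_iff_eq_zero, ← hdisj, ← hkx, ← hky]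
    exact le_inf (tsub_le_tsub_right inf_le_left _) (tsub_le_tsub_right inf_le_right _)
  rw [← tsub_inf_self (k • x), hinf, hkx]

lemma eq_of_nsmul_eq (hx : FitsTimes q x) (hy : FitsTimes q y) (hq : 1 ≤ q)
    (h : q • x = q • y) : x = y := by
  have key : ∀ {a b : A}, FitsTimes q a → FitsTimes q b → q • a = q • b → a ≤ b := by
    intro a b ha hb h
    rw [← tsub_eq_zero_iff_le, ← nonpos_iff_eq_zero]
    calc a - b ≤ q • (a - b) := le_self_nsmul zero_le (by omega)
      _ = 0 := by rw [ha.nsmul_tsub hb le_rfl, h, tsub_self]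
  exact le_antisymm (key hx hy h) (key hy hx h.symm)

end FitsTimes

def IsDivisionFamily (δ : ℕ → A → A) : Prop :=
  ∀ n, 1 ≤ n → ∀ x, n • δ n x = x ∧ FitsTimes n (δ n x)

lemma isDivisionFamily_of_scalars {s : QI → A → A}
    (h_sub : ∀ r q x, s (QI.odot r (QI.star q)) x = s r x - s q x)
    (h_one : ∀ x, s QI.one x = x) :
    IsDivisionFamily fun n => s (QI.oneOver n) := by
  intro n hn x
  obtain ⟨a, ha⟩ : ∃ a : ℕ → A, ∀ k, a k = s (QI.frac k n) x := ⟨_, fun _ => rfl⟩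
  have hsub : ∀ {i j}, i ≤ n → j ≤ n → a (i - j) = a i - a j := fun hi hj => by
    rw [ha, ha, ha, ← h_sub, QI.frac_odot_star_frac hi hj]
  have hzero : a 0 = 0 := by simpa using hsub (Nat.zero_le n) (Nat.zero_le n)
  have hnsmul : ∀ k ≤ n, k • a 1 = a k := by
    intro k hk
    induction k with
    | zero => rw [zero_nsmul, hzero]
    | succ k ih =>
      have hle : a k ≤ a (k + 1) := by
        rw [← tsub_eq_zero_iff_le, ← hsub (by omega) hk, Nat.sub_eq_zero_of_le (by omega), hzero]
      have hstep : a 1 = a (k + 1) - a k := by rw [← hsub hk (by omega), Nat.add_sub_cancel_left]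
      rw [succ_nsmul, ih (by omega), hstep, add_tsub_cancel_of_le hle]
  have hfirst : a 1 = s (QI.oneOver n) x := by rw [ha, QI.frac_one]
  show n • s (QI.oneOver n) x = x ∧ FitsTimes n (s (QI.oneOver n) x)
  rw [← hfirst]
  refine ⟨by rw [hnsmul n le_rfl, ha, QI.frac_self hn, h_one], ?_⟩
  have hlast : a 1 = a n - a (n - 1) := by rw [← hsub le_rfl (by omega), Nat.sub_sub_self hn]
  refine FitsTimes.of_le_star ?_
  rw [hnsmul (n - 1) (by omega), hlast]
  exact tsub_le_star _ _

def ofDelta (δ : ℕ → A → A) (r : QI) (x : A) : A := r.1.num.toNat • δ r.1.den x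

namespace IsDivisionFamily

variable {δ : ℕ → A → A} (hδ : IsDivisionFamily δ)
include hδ

lemma nsmul_delta {n : ℕ} (hn : 1 ≤ n) (x : A) : n • δ n x = x := (hδ n hn x).1

lemma fitsTimes {n : ℕ} (hn : 1 ≤ n) (x : A) : FitsTimes n (δ n x) := (hδ n hn x).2

lemma eq_delta {n : ℕ} {x y : A} (hn : 1 ≤ n) (hy : FitsTimes n y) (h : n • y = x) :
    y = δ n x :=
  hy.eq_of_nsmul_eq (hδ.fitsTimes hn x) hn (by rw [h, hδ.nsmul_delta hn])

lemma delta_mul_nsmul {N j k : ℕ} (hk : 1 ≤ k) (hN : 1 ≤ N) (h : j * k ≤ N) (x : A) :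
    δ k ((j * k) • δ N x) = j • δ N x :=
  (hδ.eq_delta hk ((hδ.fitsTimes hN x).nsmul hk h) (mul_nsmul _ _ _).symm).symm

lemma nsmul_delta_mul {m n : ℕ} (hm : 1 ≤ m) (hn : 1 ≤ n) (x : A) :
    m • δ (n * m) x = δ n x :=
  hδ.eq_delta hn ((hδ.fitsTimes (Nat.mul_pos hn hm) x).nsmul hn (Nat.mul_comm m n).le)
    (by rw [← mul_nsmul, Nat.mul_comm m n, hδ.nsmul_delta (Nat.mul_pos hn hm)])

lemma nsmul_delta_eq_of_div_eq {p p' q q' : ℕ} (hq : 1 ≤ q) (hq' : 1 ≤ q')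
    (h : (p : ℚ) / q = p' / q') (x : A) : p • δ q x = p' • δ q' x := by
  have hcross : p * q' = p' * q := by
    rw [div_eq_div_iff (by positivity) (by positivity)] at h
    exact_mod_cast h
  calc p • δ q x = (p * q') • δ (q * q') x := by rw [mul_nsmul', hδ.nsmul_delta_mul hq' hq]
    _ = (p' * q) • δ (q' * q) x := by rw [hcross, Nat.mul_comm q]
    _ = p' • δ q' x := by rw [mul_nsmul', hδ.nsmul_delta_mul hq hq']

lemma delta_tsub {n : ℕ} (hn : 1 ≤ n) (x y : A) : δ n (x - y) = δ n x - δ n y := by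
  have hx := hδ.fitsTimes hn x
  have hy := hδ.fitsTimes hn y
  refine (hδ.eq_delta hn (hx.mono tsub_le_self) ?_).symm
  rw [hx.nsmul_tsub hy le_rfl, hδ.nsmul_delta hn, hδ.nsmul_delta hn]

lemma ofDelta_eq {r : QI} {p q : ℕ} (hq : 1 ≤ q) (h : (p : ℚ) / q = r.1) (x : A) :
    ofDelta δ r x = p • δ q x :=
  hδ.nsmul_delta_eq_of_div_eq r.1.pos hq (r.num_toNat_div_den.trans h.symm) x

lemma ofDelta_tsub (r : QI) (x y : A) : ofDelta δ r (x - y) = ofDelta δ r x - ofDelta δ r y := by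
  obtain ⟨p, d, hd, hp, hr⟩ := r.exists_div
  simp only [hδ.ofDelta_eq hd hr]
  rw [hδ.delta_tsub hd, (hδ.fitsTimes hd x).nsmul_tsub (hδ.fitsTimes hd y) hp]

lemma ofDelta_odot_star (r q : QI) (x : A) :
    ofDelta δ (QI.odot r (QI.star q)) x = ofDelta δ r x - ofDelta δ q x := by
  obtain ⟨p₁, d₁, hd₁, hp₁, hr⟩ := r.exists_div
  obtain ⟨p₂, d₂, hd₂, -, hq⟩ := q.exists_div
  have hd : 1 ≤ d₁ * d₂ := Nat.mul_pos hd₁ hd₂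
  have hr' : ((p₁ * d₂ : ℕ) : ℚ) / (d₁ * d₂ : ℕ) = r.1 := by
    rw [← hr]
    push_cast
    field_simp
  have hq' : ((p₂ * d₁ : ℕ) : ℚ) / (d₁ * d₂ : ℕ) = q.1 := by
    rw [← hq]
    push_cast
    field_simp
  have hrq : ((p₁ * d₂ - p₂ * d₁ : ℕ) : ℚ) / (d₁ * d₂ : ℕ) = (QI.odot r (QI.star q)).1 := by
    rw [Nat.cast_tsub_div_eq_max, hr', hq', QI.val_odot_star]
  rw [hδ.ofDelta_eq hd hrq, hδ.ofDelta_eq hd hr', hδ.ofDelta_eq hd hq']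
  exact (hδ.fitsTimes hd x).tsub_nsmul (Nat.mul_le_mul_right _ hp₁)

lemma ofDelta_ofDelta (r q : QI) (x : A) :
    ofDelta δ r (ofDelta δ q x) = ofDelta δ (QI.mul r q) x := by
  obtain ⟨p₁, d₁, hd₁, -, hr⟩ := r.exists_div
  obtain ⟨p₂, d₂, hd₂, hp₂, hq⟩ := q.exists_div
  have hd : 1 ≤ d₂ * d₁ := Nat.mul_pos hd₂ hd₁
  have hrq : ((p₁ * p₂ : ℕ) : ℚ) / (d₂ * d₁ : ℕ) = (QI.mul r q).1 := by
    show _ = r.1 * q.1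
    rw [← hr, ← hq]
    push_cast
    ring
  have hinner : δ d₁ (p₂ • δ d₂ x) = p₂ • δ (d₂ * d₁) x := by
    rw [← hδ.nsmul_delta_mul hd₁ hd₂, ← mul_nsmul',
      hδ.delta_mul_nsmul hd₁ hd (Nat.mul_le_mul_right _ hp₂)]
  rw [hδ.ofDelta_eq hd₂ hq, hδ.ofDelta_eq hd₁ hr, hδ.ofDelta_eq hd hrq, hinner, mul_nsmul']

lemma ofDelta_one (x : A) : ofDelta δ QI.one x = x := by
  rw [hδ.ofDelta_eq (p := 1) le_rfl (by norm_num [QI.one])]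
  exact hδ.nsmul_delta le_rfl x

end IsDivisionFamily

end MVAlgebra

open MVAlgebra in
/-- For an MV-algebra `D`, the axioms (DMV1')–(DMV4') for a family of
scalar operations `s r` (`r ∈ [0,1] ∩ ℚ`) are equivalent to the DMV-algebra axioms
(DMV1)–(DMV2) for unary operations `δ_n` (`n ≥ 1`): the two kinds of structure exist
simultaneously, and the correspondence sends `s` to `δ_n x = (1/n)·x`. -/
theorem dmv_scalar_axioms_iff_delta_axioms {D : Type} [MVAlgebra D] :
    ((∃ s : QI → D → D,
        (∀ (r : QI) (x y : D),
            s r (odot x (star y)) = odot (s r x) (star (s r y))) ∧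
        (∀ (r q : QI) (x : D),
            s (QI.odot r (QI.star q)) x = odot (s r x) (star (s q x))) ∧
        (∀ (r q : QI) (x : D), s r (s q x) = s (QI.mul r q) x) ∧
        (∀ x : D, s QI.one x = x))
      ↔
      (∃ δ : ℕ → D → D, ∀ n : ℕ, 1 ≤ n → ∀ x : D,
          nmul n (δ n x) = x ∧
          odot (δ n x) (nmul (n - 1) (δ n x)) = (zero : D)))
    ∧
    -- the correspondence: if `s` satisfies (DMV1')–(DMV4'), then `δ_n x := (1/n)·x`
    -- satisfies (DMV1)–(DMV2)
    (∀ s : QI → D → D,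
      ((∀ (r : QI) (x y : D),
            s r (odot x (star y)) = odot (s r x) (star (s r y))) ∧
        (∀ (r q : QI) (x : D),
            s (QI.odot r (QI.star q)) x = odot (s r x) (star (s q x))) ∧
        (∀ (r q : QI) (x : D), s r (s q x) = s (QI.mul r q) x) ∧
        (∀ x : D, s QI.one x = x)) →
      ∀ n : ℕ, 1 ≤ n → ∀ x : D,
        nmul n (s (QI.oneOver n) x) = x ∧
        odot (s (QI.oneOver n) x) (nmul (n - 1) (s (QI.oneOver n) x)) = (zero : D)) := by
  refine ⟨⟨?_, ?_⟩, fun s ⟨_, h_sub, _, h_one⟩ => isDivisionFamily_of_scalars h_sub h_one⟩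
  · rintro ⟨s, -, h_sub, -, h_one⟩
    exact ⟨_, isDivisionFamily_of_scalars h_sub h_one⟩
  · rintro ⟨δ, hδ : IsDivisionFamily δ⟩
    exact ⟨ofDelta δ, hδ.ofDelta_tsub, hδ.ofDelta_odot_star, hδ.ofDelta_ofDelta, hδ.ofDelta_one⟩
end

section
/- For every a ∈ DMV_n there exists b ∈ MV_n such that the ideal of DMV_n generated by a equals the ideal generated by b: explicitly, writing a = (1/k)a₁ ⊕ ⋯ ⊕ (1/k)a_k with a₁, …, a_k ∈ MV_n, the element b = a₁ ⊕ ⋯ ⊕ a_k satisfies (a] = (b]. Consequently every principal ideal of DMV_n has a generator lying in MV_n, and moreover a(x) = 0 iff b(x) = 0 for all x ∈ [0,1]^n. -/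
open scoped BigOperators

/-- The unit cube `[0,1]^n` in `ℝ^n`. -/
def Cube (n : ℕ) : Set (Fin n → ℝ) := {x | ∀ i, 0 ≤ x i ∧ x i ≤ 1}

/-- Elements of the free `n`-generated DMV-algebra `DMV_n`: continuous
`[0,1]`-valued functions on the cube that are piecewise linear with rational
coefficients, i.e. there are finitely many affine functions with rational
coefficients such that at every point `f` agrees with one of them. -/
def IsPWLQ {n : ℕ} (f : Cube n → ℝ) : Prop :=
  Continuous f ∧ (∀ x, 0 ≤ f x ∧ f x ≤ 1) ∧
  ∃ (k : ℕ) (c : Fin k → ℚ) (a : Fin k → Fin n → ℚ),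
    ∀ x : Cube n, ∃ j, f x = (c j : ℝ) + ∑ i, (a j i : ℝ) * (x : Fin n → ℝ) i

/-- Elements of the free `n`-generated MV-algebra `MV_n`: continuous
`[0,1]`-valued functions on the cube that are piecewise linear with integer
coefficients. -/
def IsPWLZ {n : ℕ} (f : Cube n → ℝ) : Prop :=
  Continuous f ∧ (∀ x, 0 ≤ f x ∧ f x ≤ 1) ∧
  ∃ (k : ℕ) (c : Fin k → ℤ) (a : Fin k → Fin n → ℤ),
    ∀ x : Cube n, ∃ j, f x = (c j : ℝ) + ∑ i, (a j i : ℝ) * (x : Fin n → ℝ) i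

/-- Ideal of `DMV_n`: a set of elements of `DMV_n` containing `0`, downward closed,
and closed under the pointwise truncated sum `f ⊕ g = min (f + g) 1`. -/
def IsIdealQ {n : ℕ} (J : Set (Cube n → ℝ)) : Prop :=
  (∀ f ∈ J, IsPWLQ f) ∧ ((fun _ => (0 : ℝ)) ∈ J) ∧
  (∀ f ∈ J, ∀ g : Cube n → ℝ, IsPWLQ g → (∀ x, g x ≤ f x) → g ∈ J) ∧
  (∀ f ∈ J, ∀ g ∈ J, (fun x => min (f x + g x) 1) ∈ J)

/-- `g` belongs to the ideal `(f]` of `DMV_n` generated by `f`. -/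
def memGen {n : ℕ} (f g : Cube n → ℝ) : Prop :=
  ∀ J : Set (Cube n → ℝ), IsIdealQ J → f ∈ J → g ∈ J

/-- Maximal ideal of `DMV_n`: a proper ideal maximal under inclusion. -/
def IsMaxIdealQ {n : ℕ} (M : Set (Cube n → ℝ)) : Prop :=
  IsIdealQ M ∧ (∃ g : Cube n → ℝ, IsPWLQ g ∧ g ∉ M) ∧
  ∀ J : Set (Cube n → ℝ), IsIdealQ J → (∃ g : Cube n → ℝ, IsPWLQ g ∧ g ∉ J) →
    M ⊆ J → J = M

/-!
Write `a = (a₁ + ⋯ + a_k)/k` and `b = min (k a) 1`. Any ideal containing `a` contains the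
truncated multiple `min (k a) 1 = a ⊕ ⋯ ⊕ a`, and any ideal containing `b` contains `a ≤ b`;
hence `(a] = (b]`. For an arbitrary `a ∈ DMV_n`, take for `k` a common denominator of the
coefficients of the affine pieces of `a`: then `b = min (k a) 1` has integer pieces.
-/

/-- The third conjunct of `IsPWLZ`. -/
def HasIntPieces {n : ℕ} (f : Cube n → ℝ) : Prop :=
  ∃ (k : ℕ) (c : Fin k → ℤ) (a : Fin k → Fin n → ℤ),
    ∀ x : Cube n, ∃ j, f x = (c j : ℝ) + ∑ i, (a j i : ℝ) * (x : Fin n → ℝ) i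

/-- The third conjunct of `IsPWLQ`. -/
def HasRatPieces {n : ℕ} (f : Cube n → ℝ) : Prop :=
  ∃ (k : ℕ) (c : Fin k → ℚ) (a : Fin k → Fin n → ℚ),
    ∀ x : Cube n, ∃ j, f x = (c j : ℝ) + ∑ i, (a j i : ℝ) * (x : Fin n → ℝ) i

lemma Rat.exists_int_eq_mul_of_den_dvd {q : ℚ} {k : ℕ} (h : q.den ∣ k) :
    ∃ z : ℤ, (z : ℝ) = k * q := by
  obtain ⟨t, rfl⟩ := h
  refine ⟨q.num * t, ?_⟩
  have hnum : (q.num : ℝ) = q * q.den := by exact_mod_cast q.mul_den_eq_num.symm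
  push_cast [hnum]
  ring

lemma min_min_one_add_one {a y : ℝ} (hy : 0 ≤ y) : min (min a 1 + y) 1 = min (a + y) 1 := by
  rw [← min_add_add_right, min_assoc, min_eq_right (le_add_of_nonneg_right hy)]

lemma min_mul_one_eq_zero_iff {k y : ℝ} (hk : k ≠ 0) : min (k * y) 1 = 0 ↔ y = 0 := by
  rcases min_choice (k * y) 1 with h | h <;> rw [h]
  · simp [hk]
  · constructor
    · intro h1; norm_num at h1
    · rintro rfl; simp at h

section Pieces

variable {n : ℕ}

lemma HasIntPieces.sum {ι : Type*} [Fintype ι] {a : ι → Cube n → ℝ}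
    (h : ∀ j, HasIntPieces (a j)) : HasIntPieces fun x => ∑ j, a j x := by
  choose m c co hc using h
  -- a piece of the sum is a choice of one piece of each summand
  let e := Finite.equivFin (∀ j, Fin (m j))
  refine ⟨_, fun p => ∑ j, c j (e.symm p j), fun p i => ∑ j, co j (e.symm p j) i,
    fun x => ?_⟩
  choose t ht using fun j => hc j x
  refine ⟨e t, ?_⟩
  simp only [Equiv.symm_apply_apply, ht, Int.cast_sum, Finset.sum_mul, Finset.sum_add_distrib]
  rw [Finset.sum_comm]

lemma HasIntPieces.min_one {f : Cube n → ℝ} (h : HasIntPieces f) :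
    HasIntPieces fun x => min (f x) 1 := by
  obtain ⟨m, c, a, hp⟩ := h
  refine ⟨m + 1, Fin.cons 1 c, Fin.cons 0 a, fun x => ?_⟩
  rcases le_or_gt 1 (f x) with h | h
  · exact ⟨0, by simp [min_eq_right h]⟩
  · obtain ⟨j, hj⟩ := hp x
    exact ⟨j.succ, by simp only [min_eq_left h.le]; simp [hj]⟩

lemma HasIntPieces.div_nat {f : Cube n → ℝ} (h : HasIntPieces f) (k : ℕ) :
    HasRatPieces fun x => f x / k := by
  obtain ⟨m, c, a, hp⟩ := h
  refine ⟨m, fun j => c j / k, fun j i => a j i / k, fun x => ?_⟩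
  obtain ⟨j, hj⟩ := hp x
  refine ⟨j, ?_⟩
  simp only [hj, Rat.cast_div, Rat.cast_intCast, Rat.cast_natCast, add_div, Finset.sum_div,
    div_mul_eq_mul_div]

lemma HasRatPieces.exists_nat_mul {f : Cube n → ℝ} (h : HasRatPieces f) :
    ∃ k : ℕ, 1 ≤ k ∧ HasIntPieces fun x => k * f x := by
  obtain ⟨m, c, a, hp⟩ := h
  set k := ∏ j, ((c j).den * ∏ i, (a j i).den)
  have hc (j) : (c j).den ∣ k :=
    (dvd_mul_right _ _).trans (Finset.dvd_prod_of_mem _ (Finset.mem_univ j))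
  have ha (j i) : (a j i).den ∣ k :=
    (dvd_mul_of_dvd_right (Finset.dvd_prod_of_mem _ (Finset.mem_univ i)) _).trans
      (Finset.dvd_prod_of_mem _ (Finset.mem_univ j))
  choose zc hzc using fun j => Rat.exists_int_eq_mul_of_den_dvd (hc j)
  choose za hza using fun j i => Rat.exists_int_eq_mul_of_den_dvd (ha j i)
  have hk : 0 < k :=
    Finset.prod_pos fun j _ => Nat.mul_pos (c j).pos (Finset.prod_pos fun i _ => (a j i).pos)
  refine ⟨k, hk, m, zc, za, fun x => ?_⟩
  obtain ⟨j, hj⟩ := hp x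
  exact ⟨j, by simp only [hj, hzc, hza, mul_add, Finset.mul_sum, mul_assoc]⟩

lemma isPWLQ_div_nat {s : Cube n → ℝ} {k : ℕ} (hs : Continuous s) (hs0 : ∀ x, 0 ≤ s x)
    (hsk : ∀ x, s x ≤ k) (hp : HasIntPieces s) : IsPWLQ fun x => s x / k :=
  ⟨hs.div_const _,
    fun x => ⟨div_nonneg (hs0 x) k.cast_nonneg, div_le_one_of_le₀ (hsk x) k.cast_nonneg⟩,
    hp.div_nat k⟩

lemma isPWLZ_min_one {s : Cube n → ℝ} (hs : Continuous s) (hs0 : ∀ x, 0 ≤ s x)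
    (hp : HasIntPieces s) : IsPWLZ fun x => min (s x) 1 :=
  ⟨hs.min continuous_const, fun x => ⟨le_min (hs0 x) zero_le_one, min_le_right _ _⟩,
    hp.min_one⟩

end Pieces

section Ideals

variable {n : ℕ}

lemma IsIdealQ.min_nat_mul_mem {J : Set (Cube n → ℝ)} (hJ : IsIdealQ J) {f : Cube n → ℝ}
    (hf : f ∈ J) (k : ℕ) : (fun x => min (k * f x) 1) ∈ J := by
  induction k with
  | zero => simpa using hJ.2.1
  | succ k ih =>
    convert hJ.2.2.2 _ ih f hf using 2 with x
    rw [min_min_one_add_one ((hJ.1 f hf).2.1 x).1]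
    push_cast
    ring_nf

lemma memGen.trans {f g h : Cube n → ℝ} (hfg : memGen f g) (hgh : memGen g h) : memGen f h :=
  fun J hJ hf => hgh J hJ (hfg J hJ hf)

lemma memGen_of_le {f b : Cube n → ℝ} (hf : IsPWLQ f) (hfb : ∀ x, f x ≤ b x) : memGen b f :=
  fun _ hJ hb => hJ.2.2.1 b hb f hf hfb

lemma memGen_min_nat_mul (f : Cube n → ℝ) (k : ℕ) : memGen f fun x => min (k * f x) 1 :=
  fun _ hJ hf => hJ.min_nat_mul_mem hf k

lemma memGen_iff_memGen_min_nat_mul {f : Cube n → ℝ} (hf : IsPWLQ f) {k : ℕ} (hk : 1 ≤ k)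
    (g : Cube n → ℝ) : memGen f g ↔ memGen (fun x => min (k * f x) 1) g := by
  have hfb : memGen (fun x => min (k * f x) 1) f := memGen_of_le hf fun x =>
    le_min (le_mul_of_one_le_left (hf.2.1 x).1 (by exact_mod_cast hk)) (hf.2.1 x).2
  exact ⟨hfb.trans, (memGen_min_nat_mul f k).trans⟩

end Ideals

/-- Every principal ideal of `DMV_n` has a generator in `MV_n`:
writing `a = (1/k)a₁ ⊕ ⋯ ⊕ (1/k)a_k` with `a₁, …, a_k ∈ MV_n`, the element
`b = a₁ ⊕ ⋯ ⊕ a_k ∈ MV_n` generates the same ideal, `(a] = (b]`; moreover `a` and `b`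
have the same zeros. Consequently, for every `a ∈ DMV_n` there is `b ∈ MV_n` with
`(a] = (b]` and the same zeroset. -/
theorem principal_ideal_mv_generator (n : ℕ) :
    (∀ k : ℕ, 1 ≤ k → ∀ a : Fin k → (Cube n → ℝ), (∀ j, IsPWLZ (a j)) →
      ∀ f : Cube n → ℝ, (∀ x, f x = ∑ j, a j x / (k : ℝ)) →
      ∀ b : Cube n → ℝ, (∀ x, b x = min (∑ j, a j x) 1) →
        IsPWLQ f ∧ IsPWLZ b ∧
        (∀ g : Cube n → ℝ, memGen f g ↔ memGen b g) ∧
        (∀ x, f x = 0 ↔ b x = 0)) ∧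
    (∀ f : Cube n → ℝ, IsPWLQ f →
      ∃ b : Cube n → ℝ, IsPWLZ b ∧
        (∀ g : Cube n → ℝ, memGen f g ↔ memGen b g) ∧
        (∀ x, f x = 0 ↔ b x = 0)) := by
  refine ⟨fun k hk a ha f hf b hb => ?_, fun f hf => ?_⟩
  · have hk0 : (k : ℝ) ≠ 0 := by positivity
    set s : Cube n → ℝ := fun x => ∑ j, a j x
    have hs : Continuous s := continuous_finsetSum _ fun j _ => (ha j).1
    have hs0 (x) : 0 ≤ s x := Finset.sum_nonneg fun j _ => ((ha j).2.1 x).1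
    have hsk (x) : s x ≤ k := by
      simpa using Finset.sum_le_sum fun j (_ : j ∈ Finset.univ) => ((ha j).2.1 x).2
    have hp : HasIntPieces s := HasIntPieces.sum fun j => (ha j).2.2
    obtain rfl : f = fun x => s x / k := funext fun x => (hf x).trans (Finset.sum_div ..).symm
    obtain rfl : b = fun x => min (k * (s x / k)) 1 :=
      funext fun x => by rw [hb x, mul_div_cancel₀ _ hk0]
    have hfQ := isPWLQ_div_nat hs hs0 hsk hp
    refine ⟨hfQ, ?_, memGen_iff_memGen_min_nat_mul hfQ hk,
      fun x => (min_mul_one_eq_zero_iff hk0).symm⟩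
    simp only [mul_div_cancel₀ _ hk0]
    exact isPWLZ_min_one hs hs0 hp
  · obtain ⟨k, hk, hkf⟩ := HasRatPieces.exists_nat_mul hf.2.2
    refine ⟨fun x => min (k * f x) 1, ?_, memGen_iff_memGen_min_nat_mul hf hk,
      fun x => (min_mul_one_eq_zero_iff (by positivity)).symm⟩
    exact isPWLZ_min_one (continuous_const.mul hf.1)
      (fun x => mul_nonneg k.cast_nonneg (hf.2.1 x).1) hkf
end

section
/- For f, g ∈ DMV_n, g belongs to the ideal (f] of DMV_n generated by f if and only if V(f) ⊆ V(g), i.e., every zero of f in [0,1]^n is a zero of g. -/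
open scoped BigOperators

/-!
If `V(f) ⊆ V(g)`, then `g ≤ m f` on the cube for some `m : ℕ`, hence
`g ≤ min (m f) 1 = f ⊕ ⋯ ⊕ f ∈ (f]`; conversely, `{h | V(f) ⊆ V(h)}` is an ideal containing `f`.

The bound `g = O(f)` is local, by compactness, and trivial away from `V(f)`. Near a zero `x₀`
of `f` only the affine pieces vanishing at `x₀` are active, so on a small box around `x₀` both
`f` and `g` are cones with apex `x₀`. Scaling along rays from `x₀` reduces the bound to the faces
of that box, where it holds by induction on the dimension.
-/

open Set Filter Topology Asymptotics AffineMap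

def IsPiecewiseAffineOn {E : Type*} [AddCommGroup E] [Module ℝ E] (f : E → ℝ) (K : Set E) :
    Prop :=
  ∃ P : Set (E →ᵃ[ℝ] ℝ), P.Finite ∧ ∀ x ∈ K, ∃ φ ∈ P, f x = φ x

section PiecewiseAffine

variable {E E' : Type*} [AddCommGroup E] [Module ℝ E] [AddCommGroup E'] [Module ℝ E']
  {f : E → ℝ} {K : Set E}

lemma IsPiecewiseAffineOn.comp (hf : IsPiecewiseAffineOn f K) (e : E' →ᵃ[ℝ] E) {L : Set E'}
    (he : MapsTo e L K) : IsPiecewiseAffineOn (f ∘ e) L := by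
  obtain ⟨P, hP, hfP⟩ := hf
  refine ⟨(fun φ => φ.comp e) '' P, hP.image _, fun x hx => ?_⟩
  obtain ⟨φ, hφ, hfx⟩ := hfP (e x) (he hx)
  exact ⟨φ.comp e, mem_image_of_mem _ hφ, hfx⟩

end PiecewiseAffine

lemma eq_mul_apply_one_of_finite_slopes {h : ℝ → ℝ} {S : Set ℝ} (hS : S.Finite)
    (hc : ContinuousOn h (Icc 0 1)) (hslopes : ∀ t ∈ Icc (0 : ℝ) 1, ∃ s ∈ S, h t = t * s)
    {t : ℝ} (ht : t ∈ Icc (0 : ℝ) 1) : h t = t * h 1 := by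
  rcases ht.1.eq_or_lt with rfl | ht0
  · obtain ⟨s, -, hs⟩ := hslopes 0 ht
    simpa using hs
  have : Finite S := hS.to_subtype
  have hconst : h t / t = h 1 / 1 :=
    isPreconnected_Ioc.constant_of_mapsTo (isDiscrete_iff_discreteTopology.2 inferInstance)
      ((hc.mono Ioc_subset_Icc_self).div continuousOn_id fun s hs => hs.1.ne')
      (fun s hs => by
        obtain ⟨σ, hσ, hsσ⟩ := hslopes s (Ioc_subset_Icc_self hs)
        simpa [hsσ, hs.1.ne'] using hσ)
      ⟨ht0, ht.2⟩ ⟨one_pos, le_rfl⟩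
  rw [div_one, div_eq_iff ht0.ne'] at hconst
  rw [hconst, mul_comm]

section Normed

variable {E : Type*} [NormedAddCommGroup E] [NormedSpace ℝ E]

lemma IsPiecewiseAffineOn.exists_ball_lineMap_eq_mul [FiniteDimensional ℝ E] {f : E → ℝ}
    {K : Set E} {x₀ : E} (hpa : IsPiecewiseAffineOn f K) (hK : Convex ℝ K)
    (hfc : ContinuousOn f K) (hx₀ : x₀ ∈ K) (hf0 : f x₀ = 0) :
    ∃ ε > 0, ∀ z ∈ Metric.ball x₀ ε ∩ K, ∀ t ∈ Icc (0 : ℝ) 1,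
      f (lineMap x₀ z t) = t * f z := by
  obtain ⟨P, hP, hfP⟩ := hpa
  have hnear : ∀ᶠ y in 𝓝[K] x₀, ∀ φ ∈ {φ ∈ P | φ x₀ ≠ 0}, f y ≠ φ y := by
    refine (hP.sep _).eventually_all.2 fun φ hφ => ?_
    have hlim : Tendsto (fun y => f y - φ y) (𝓝[K] x₀) (𝓝 (f x₀ - φ x₀)) :=
      (hfc x₀ hx₀).sub φ.continuous_of_finiteDimensional.continuousWithinAt
    exact (hlim.eventually_ne (by simpa [hf0] using hφ.2)).mono fun y hy => sub_ne_zero.1 hy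
  obtain ⟨ε, hε, hball⟩ := Metric.mem_nhdsWithin_iff.1 hnear
  refine ⟨ε, hε, fun z hz t ht => ?_⟩
  have hseg : ∀ s ∈ Icc (0 : ℝ) 1, lineMap x₀ z s ∈ Metric.ball x₀ ε ∩ K := fun s hs =>
    ((convex_ball x₀ ε).inter hK).lineMap_mem ⟨Metric.mem_ball_self hε, hx₀⟩ hz hs
  -- near `x₀` only the pieces vanishing at `x₀` are active, and those are linear along rays
  have hslopes : ∀ s ∈ Icc (0 : ℝ) 1, ∃ σ ∈ (fun φ => φ z) '' P, f (lineMap x₀ z s) = s * σ := by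
    intro s hs
    obtain ⟨φ, hφ, hfφ⟩ := hfP _ (hseg s hs).2
    have hφ0 : φ x₀ = 0 := by_contra fun hne => hball (hseg s hs) φ ⟨hφ, hne⟩ hfφ
    exact ⟨φ z, mem_image_of_mem _ hφ, by rw [hfφ, φ.apply_lineMap, hφ0]; simp [lineMap_apply]⟩
  simpa using eq_mul_apply_one_of_finite_slopes (hP.image _)
    (hfc.comp lineMap_continuous.continuousOn fun s hs => (hseg s hs).2) hslopes ht

lemma exists_lineMap_mem_frontier {B : Set E} (hB : IsCompact B) {x₀ z : E} (hz : z ∈ B)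
    (hne : z ≠ x₀) : ∃ T : ℝ, 1 ≤ T ∧ lineMap x₀ z T ∈ frontier B := by
  have hcont : Continuous (lineMap x₀ z : ℝ → E) := lineMap_continuous
  have hS : IsCompact (Ici (1 : ℝ) ∩ lineMap x₀ z ⁻¹' B) :=
    Metric.isCompact_of_isClosed_isBounded (isClosed_Ici.inter (hB.isClosed.preimage hcont))
      (((antilipschitzWith_lineMap hne.symm).isBounded_preimage hB.isBounded).subset
        inter_subset_right)
  obtain ⟨T, hT, hTmax⟩ := hS.exists_isGreatest ⟨1, self_mem_Ici, by simpa using hz⟩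
  refine ⟨T, hT.1, hB.isClosed.frontier_eq ▸ ⟨hT.2, fun hint => ?_⟩⟩
  have hnear : ∀ᶠ s in 𝓝[>] T, lineMap x₀ z s ∈ interior B :=
    ((hcont.tendsto T).eventually (isOpen_interior.mem_nhds hint)).filter_mono nhdsWithin_le_nhds
  obtain ⟨s, hsB, hTs⟩ := (hnear.and self_mem_nhdsWithin).exists
  exact (hTmax ⟨hT.1.trans hTs.le, interior_subset (s := B) hsB⟩).not_gt hTs

lemma isBigO_principal_of_lineMap_eq_mul {B : Set E} (hB : IsCompact B) {x₀ : E} {f g : E → ℝ}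
    (hf : ∀ z ∈ B, ∀ t ∈ Icc (0 : ℝ) 1, f (lineMap x₀ z t) = t * f z)
    (hg : ∀ z ∈ B, ∀ t ∈ Icc (0 : ℝ) 1, g (lineMap x₀ z t) = t * g z)
    (hfr : g =O[𝓟 (frontier B)] f) : g =O[𝓟 B] f := by
  obtain ⟨c, hc⟩ := isBigO_principal.1 hfr
  refine isBigO_principal.2 ⟨c, fun z hz => ?_⟩
  rcases eq_or_ne z x₀ with rfl | hne
  · have hf0 := hf z hz 0 ⟨le_rfl, zero_le_one⟩
    have hg0 := hg z hz 0 ⟨le_rfl, zero_le_one⟩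
    rw [lineMap_apply_zero, zero_mul] at hf0 hg0
    simp [hf0, hg0]
  obtain ⟨T, hT, hw⟩ := exists_lineMap_mem_frontier hB hz hne
  have hwB : lineMap x₀ z T ∈ B := hB.isClosed.frontier_subset hw
  have hT' : T⁻¹ ∈ Icc (0 : ℝ) 1 := ⟨by positivity, inv_le_one_of_one_le₀ hT⟩
  have hzw : lineMap x₀ (lineMap x₀ z T) T⁻¹ = z := by
    simp [inv_mul_cancel₀ (by positivity : T ≠ 0)]
  rw [← hzw, hf _ hwB _ hT', hg _ hwB _ hT', norm_mul, norm_mul, mul_left_comm]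
  exact mul_le_mul_of_nonneg_left (hc _ hw) (norm_nonneg _)

end Normed

lemma isBigO_principal_iUnion {α ι E F : Type*} [Norm E] [SeminormedAddCommGroup F] [Finite ι]
    {s : ι → Set α} {f : α → F} {g : α → E}
    (h : ∀ i, g =O[𝓟 (s i)] f) : g =O[𝓟 (⋃ i, s i)] f := by
  choose c hc using fun i => isBigO_principal.1 (h i)
  have := Fintype.ofFinite ι
  refine isBigO_principal.2 ⟨∑ i, |c i|, fun x hx => ?_⟩
  obtain ⟨i, hi⟩ := mem_iUnion.1 hx
  calc ‖g x‖ ≤ c i * ‖f x‖ := hc i x hi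
    _ ≤ (∑ j, |c j|) * ‖f x‖ := by
      gcongr
      exact (le_abs_self _).trans
        (Finset.single_le_sum (fun j _ => abs_nonneg (c j)) (Finset.mem_univ i))

lemma IsCompact.isBigO_principal_of_forall_nhdsWithin {X E F : Type*} [TopologicalSpace X]
    [Norm E] [SeminormedAddCommGroup F] {K : Set X} (hK : IsCompact K) {f : X → F} {g : X → E}
    (h : ∀ x ∈ K, g =O[𝓝[K] x] f) : g =O[𝓟 K] f := by
  refine hK.induction_on (p := fun s => g =O[𝓟 s] f) (by simp [isBigO_bot])
    (fun s t hst ht => ht.mono (principal_mono.2 hst))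
    (fun s t hs ht => sup_principal (s := s) ▸ hs.sup ht) fun x hx => ?_
  obtain ⟨c, hc⟩ := (h x hx).bound
  exact ⟨_, hc, isBigO_principal.2 ⟨c, fun y hy => hy⟩⟩

lemma isBigO_nhdsWithin_of_ne_zero {X 𝕜 : Type*} [TopologicalSpace X] [NormedField 𝕜]
    {K : Set X} {x₀ : X} {f g : X → 𝕜} (hf : ContinuousWithinAt f K x₀)
    (hg : ContinuousWithinAt g K x₀) (hfx : f x₀ ≠ 0) : g =O[𝓝[K] x₀] f :=
  isBigO_of_div_tendsto_nhds ((hf.eventually_ne hfx).mono fun _ hx h => absurd h hx) _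
    (hg.div hf hfx)

section Box

variable {ι : Type*} [Fintype ι]

lemma exists_eq_or_eq_of_mem_frontier_Icc {l u w : ι → ℝ} (hw : w ∈ frontier (Icc l u)) :
    ∃ i, w i = l i ∨ w i = u i := by
  rw [isClosed_Icc.frontier_eq, ← pi_univ_Icc, interior_pi_set finite_univ] at hw
  obtain ⟨hwIcc, hwint⟩ := hw
  simp only [interior_Icc, Set.mem_pi, mem_univ, true_implies, not_forall] at hwIcc hwint
  obtain ⟨i, hi⟩ := hwint
  refine ⟨i, ?_⟩
  rcases (hwIcc i).1.eq_or_lt with h | h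
  · exact Or.inl h.symm
  · exact Or.inr (by_contra fun h' => hi ⟨h, (hwIcc i).2.lt_of_ne h'⟩)

lemma Icc_inter_closedBall (l u x : ι → ℝ) {r : ℝ} (hr : 0 ≤ r) :
    Icc l u ∩ Metric.closedBall x r = Icc (l ⊔ (x - fun _ => r)) (u ⊓ (x + fun _ => r)) := by
  rw [closedBall_pi x hr, ← pi_univ_Icc, ← pi_univ_Icc, ← pi_inter_distrib]
  simp [Real.closedBall_eq_Icc, Icc_inter_Icc]

lemma isBigO_frontier_Icc_of_isBigO_faces {E F : Type*} [Norm E] [SeminormedAddCommGroup F]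
    {l u : ι → ℝ} {f : (ι → ℝ) → F} {g : (ι → ℝ) → E} (hle : l ≤ u)
    (hfaces : ∀ i, ∀ v ∈ Icc (l i) (u i), g =O[𝓟 (Icc l u ∩ {w | w i = v})] f) :
    g =O[𝓟 (frontier (Icc l u))] f := by
  have hcover : frontier (Icc l u) ⊆
      (⋃ i, Icc l u ∩ {w | w i = l i}) ∪ ⋃ i, Icc l u ∩ {w | w i = u i} := fun w hw => by
    have hwIcc : w ∈ Icc l u := isClosed_Icc.frontier_subset hw
    obtain ⟨i, hi | hi⟩ := exists_eq_or_eq_of_mem_frontier_Icc hw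
    · exact Or.inl (mem_iUnion.2 ⟨i, hwIcc, hi⟩)
    · exact Or.inr (mem_iUnion.2 ⟨i, hwIcc, hi⟩)
  refine IsBigO.mono ?_ (principal_mono.2 hcover)
  rw [← sup_principal]
  exact (isBigO_principal_iUnion fun i => hfaces i _ ⟨le_rfl, hle i⟩).sup
    (isBigO_principal_iUnion fun i => hfaces i _ ⟨hle i, le_rfl⟩)

end Box

def Fin.insertNthAffine (R : Type*) {M : Type*} [Ring R] [AddCommGroup M] [Module R M] {n : ℕ}
    (i : Fin (n + 1)) (v : M) : (Fin n → M) →ᵃ[R] (Fin (n + 1) → M) where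
  toFun := Fin.insertNth (α := fun _ => M) i v
  linear :=
    { toFun := Fin.insertNth (α := fun _ => M) i 0
      map_add' p q := by rw [← Fin.insertNth_add, add_zero]
      map_smul' c p := by
        ext j
        induction j using Fin.succAboveCases i <;> simp }
  map_vadd' p q := by simp [← Fin.insertNth_add]

lemma Fin.coe_insertNthAffine (R : Type*) {M : Type*} [Ring R] [AddCommGroup M] [Module R M]
    {n : ℕ} (i : Fin (n + 1)) (v : M) :
    ⇑(Fin.insertNthAffine R i v) = Fin.insertNth (α := fun _ => M) i v :=
  rfl

lemma Fin.setOf_apply_eq_eq_range_insertNth {M : Type*} {n : ℕ} (i : Fin (n + 1)) (v : M) :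
    {w : Fin (n + 1) → M | w i = v} = range (Fin.insertNth (α := fun _ => M) i v) := by
  ext w
  refine ⟨fun hw => ⟨i.removeNth w, ?_⟩, ?_⟩
  · rw [← hw, Fin.insertNth_self_removeNth]
  · rintro ⟨p, rfl⟩
    exact Fin.insertNth_apply_same (α := fun _ => M) i v p

lemma isBigO_face_of_isBigO_insertNth {n : ℕ} {l u : Fin (n + 1) → ℝ}
    {f g : (Fin (n + 1) → ℝ) → ℝ} {i : Fin (n + 1)} {v : ℝ} (hv : v ∈ Icc (l i) (u i))
    (h : (g ∘ Fin.insertNthAffine ℝ i v) =O[𝓟 (Icc (l ∘ i.succAbove) (u ∘ i.succAbove))]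
      (f ∘ Fin.insertNthAffine ℝ i v)) :
    g =O[𝓟 (Icc l u ∩ {w | w i = v})] f := by
  rwa [Fin.setOf_apply_eq_eq_range_insertNth, ← image_preimage_eq_inter_range,
    Fin.preimage_insertNth_Icc_of_mem hv, ← map_principal, isBigO_map]

lemma isBigO_Icc_of_isBigO_faces {n : ℕ} {l u : Fin n → ℝ} {f g : (Fin n → ℝ) → ℝ}
    (hfc : ContinuousOn f (Icc l u)) (hgc : ContinuousOn g (Icc l u))
    (hf : IsPiecewiseAffineOn f (Icc l u)) (hg : IsPiecewiseAffineOn g (Icc l u))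
    (hz : ∀ x ∈ Icc l u, f x = 0 → g x = 0)
    (hfaces : ∀ l' u', Icc l' u' ⊆ Icc l u → ∀ i, ∀ v ∈ Icc (l' i) (u' i),
      g =O[𝓟 (Icc l' u' ∩ {w | w i = v})] f) :
    g =O[𝓟 (Icc l u)] f := by
  refine isCompact_Icc.isBigO_principal_of_forall_nhdsWithin fun x₀ hx₀ => ?_
  rcases ne_or_eq (f x₀) 0 with hfx | hfx
  · exact isBigO_nhdsWithin_of_ne_zero (hfc x₀ hx₀) (hgc x₀ hx₀) hfx
  obtain ⟨εf, hεf, hconef⟩ := hf.exists_ball_lineMap_eq_mul (convex_Icc l u) hfc hx₀ hfx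
  obtain ⟨εg, hεg, hconeg⟩ :=
    hg.exists_ball_lineMap_eq_mul (convex_Icc l u) hgc hx₀ (hz x₀ hx₀ hfx)
  let ρ := min εf εg / 2
  have hρ : 0 < ρ := by positivity
  obtain ⟨l', u', hB⟩ : ∃ l' u', Icc l' u' = Icc l u ∩ Metric.closedBall x₀ ρ :=
    ⟨_, _, (Icc_inter_closedBall l u x₀ hρ.le).symm⟩
  have hBsub : Icc l' u' ⊆ Icc l u := hB ▸ inter_subset_left
  have hBball : Icc l' u' ⊆ Metric.ball x₀ (min εf εg) := hB ▸ fun z hz =>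
    Metric.closedBall_subset_ball (half_lt_self (lt_min hεf hεg)) hz.2
  have hx₀' : x₀ ∈ Icc l' u' := hB ▸ ⟨hx₀, Metric.mem_closedBall_self hρ.le⟩
  refine IsBigO.mono ?_ (le_principal_iff.2 (hB ▸ inter_mem_nhdsWithin _
    (Metric.closedBall_mem_nhds x₀ hρ)))
  exact isBigO_principal_of_lineMap_eq_mul isCompact_Icc
    (fun z hz => hconef z ⟨Metric.ball_subset_ball (min_le_left _ _) (hBball hz), hBsub hz⟩)
    (fun z hz => hconeg z ⟨Metric.ball_subset_ball (min_le_right _ _) (hBball hz), hBsub hz⟩)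
    (isBigO_frontier_Icc_of_isBigO_faces (hx₀'.1.trans hx₀'.2) (hfaces l' u' hBsub))

theorem isBigO_Icc_of_zero_subset : ∀ {n : ℕ} {l u : Fin n → ℝ} {f g : (Fin n → ℝ) → ℝ},
    ContinuousOn f (Icc l u) → ContinuousOn g (Icc l u) →
    IsPiecewiseAffineOn f (Icc l u) → IsPiecewiseAffineOn g (Icc l u) →
    (∀ x ∈ Icc l u, f x = 0 → g x = 0) → g =O[𝓟 (Icc l u)] f
  | 0, _, _, _, _, hfc, hgc, hf, hg, hz =>
    isBigO_Icc_of_isBigO_faces hfc hgc hf hg hz fun _ _ _ i => i.elim0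
  | n + 1, l, u, f, g, hfc, hgc, hf, hg, hz =>
    isBigO_Icc_of_isBigO_faces hfc hgc hf hg hz fun l' u' hsub i v hv => by
      set e := Fin.insertNthAffine ℝ i v
      have he : MapsTo e (Icc (l' ∘ i.succAbove) (u' ∘ i.succAbove)) (Icc l u) := fun y hy =>
        hsub (by
          rwa [← mem_preimage, Fin.coe_insertNthAffine, Fin.preimage_insertNth_Icc_of_mem hv])
      have hec : Continuous e := e.continuous_of_finiteDimensional
      exact isBigO_face_of_isBigO_insertNth hv (isBigO_Icc_of_zero_subset
        (hfc.comp hec.continuousOn he) (hgc.comp hec.continuousOn he) (hf.comp e he) (hg.comp e he)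
        fun y hy => hz _ (he hy))

lemma cube_eq_Icc (n : ℕ) : Cube n = Icc 0 1 := by
  ext x
  simp [Cube, Pi.le_def, forall_and]

section DMV

variable {n : ℕ} {f g : Cube n → ℝ}

lemma IsPWLQ.continuousOn_extend (hf : IsPWLQ f) :
    ContinuousOn (Function.extend Subtype.val f 0) (Icc 0 1) := by
  rw [← cube_eq_Icc, continuousOn_iff_continuous_domRestrict]
  convert hf.1 using 1
  funext x
  exact Subtype.val_injective.extend_apply f 0 x

lemma IsPWLQ.isPiecewiseAffineOn_extend (hf : IsPWLQ f) :
    IsPiecewiseAffineOn (Function.extend Subtype.val f 0) (Icc 0 1) := by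
  rw [← cube_eq_Icc]
  obtain ⟨-, -, k, c, a, hpieces⟩ := hf
  refine ⟨range fun j => AffineMap.const ℝ _ (c j : ℝ) +
    (∑ i, (a j i : ℝ) • LinearMap.proj i).toAffineMap, finite_range _, fun x hx => ?_⟩
  obtain ⟨j, hj⟩ := hpieces ⟨x, hx⟩
  refine ⟨_, mem_range_self j, ?_⟩
  rw [show x = ((⟨x, hx⟩ : Cube n) : Fin n → ℝ) from rfl, Subtype.val_injective.extend_apply, hj]
  simp

lemma IsPWLQ.exists_nat_le_mul (hf : IsPWLQ f) (hg : IsPWLQ g)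
    (hz : ∀ x, f x = 0 → g x = 0) : ∃ m : ℕ, ∀ x, g x ≤ m * f x := by
  have hext : ∀ (h : Cube n → ℝ) (x : Cube n), Function.extend Subtype.val h 0 x = h x :=
    fun h => Subtype.val_injective.extend_apply h 0
  have hO := isBigO_Icc_of_zero_subset hf.continuousOn_extend hg.continuousOn_extend
    hf.isPiecewiseAffineOn_extend hg.isPiecewiseAffineOn_extend fun x hx hfx => by
      obtain ⟨y, rfl⟩ : ∃ y : Cube n, ↑y = x := ⟨⟨x, cube_eq_Icc n ▸ hx⟩, rfl⟩
      rw [hext] at hfx ⊢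
      exact hz y hfx
  obtain ⟨c, hc⟩ := isBigO_principal.1 hO
  refine ⟨⌈c⌉₊, fun x => ?_⟩
  have hcx := hc x (cube_eq_Icc n ▸ x.2)
  rw [hext, hext, Real.norm_of_nonneg (hg.2.1 x).1, Real.norm_of_nonneg (hf.2.1 x).1] at hcx
  exact hcx.trans (mul_le_mul_of_nonneg_right (Nat.le_ceil c) (hf.2.1 x).1)

lemma isPWLQ_of_finite {f : Cube n → ℝ} (hc : Continuous f) (hb : ∀ x, 0 ≤ f x ∧ f x ≤ 1)
    {S : Set (ℚ × (Fin n → ℚ))} (hS : S.Finite)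
    (hpieces : ∀ x : Cube n, ∃ p ∈ S, f x = p.1 + ∑ i, (p.2 i : ℝ) * (x : Fin n → ℝ) i) :
    IsPWLQ f := by
  obtain ⟨k, e, he⟩ := hS.fin_embedding
  refine ⟨hc, hb, k, fun j => (e j).1, fun j => (e j).2, fun x => ?_⟩
  obtain ⟨p, hp, hfx⟩ := hpieces x
  obtain ⟨j, rfl⟩ := he ▸ hp
  exact ⟨j, hfx⟩

lemma isPWLQ_zero : IsPWLQ (fun _ : Cube n => (0 : ℝ)) :=
  ⟨continuous_const, fun _ => ⟨le_rfl, zero_le_one⟩, 1, 0, 0, fun _ => ⟨0, by simp⟩⟩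

lemma IsPWLQ.oplus (hf : IsPWLQ f) (hg : IsPWLQ g) : IsPWLQ (fun x => min (f x + g x) 1) := by
  obtain ⟨hfc, hfb, k₁, c₁, a₁, hf⟩ := hf
  obtain ⟨hgc, hgb, k₂, c₂, a₂, hg⟩ := hg
  refine isPWLQ_of_finite ((hfc.add hgc).min continuous_const)
    (fun x => ⟨le_min (add_nonneg (hfb x).1 (hgb x).1) zero_le_one, min_le_right _ _⟩)
    ((finite_range fun p : Fin k₁ × Fin k₂ => (c₁ p.1 + c₂ p.2, a₁ p.1 + a₂ p.2)).insert (1, 0))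
    fun x => ?_
  rcases le_or_gt (f x + g x) 1 with h | h
  · obtain ⟨j₁, h₁⟩ := hf x
    obtain ⟨j₂, h₂⟩ := hg x
    refine ⟨_, mem_insert_of_mem _ (mem_range_self (j₁, j₂)), ?_⟩
    rw [min_eq_left h, h₁, h₂]
    simp [add_mul, Finset.sum_add_distrib]
    ring
  · exact ⟨(1, 0), mem_insert _ _, by simp [h.le]⟩

lemma isIdealQ_setOf_zero_subset (f : Cube n → ℝ) :
    IsIdealQ {h | IsPWLQ h ∧ ∀ x, f x = 0 → h x = 0} :=
  ⟨fun _ hh => hh.1, ⟨isPWLQ_zero, fun _ _ => rfl⟩,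
    fun _ hh _ hh' hle => ⟨hh', fun x hx => le_antisymm (hh.2 x hx ▸ hle x) (hh'.2.1 x).1⟩,
    fun _ hh₁ _ hh₂ => ⟨hh₁.1.oplus hh₂.1, fun x hx => by simp [hh₁.2 x hx, hh₂.2 x hx]⟩⟩

lemma IsIdealQ.min_nsmul_mem {J : Set (Cube n → ℝ)} (hJ : IsIdealQ J) (hfJ : f ∈ J) (m : ℕ) :
    (fun x => min (m * f x) 1) ∈ J := by
  induction m with
  | zero => simpa using hJ.2.1
  | succ m ih =>
    convert hJ.2.2.2 _ ih f hfJ using 2 with x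
    have hfx := ((hJ.1 f hfJ).2.1 x).1
    push_cast
    rcases le_total (m * f x) 1 with h | h
    · rw [min_eq_left h]
      ring_nf
    · rw [min_eq_right h, min_eq_right (by linarith), min_eq_right (by nlinarith)]

end DMV

/-- For `f, g ∈ DMV_n`: `g ∈ (f]` if and only if `V(f) ⊆ V(g)`,
i.e. every zero of `f` in `[0,1]^n` is a zero of `g`. -/
theorem memGen_iff_zeroset_subset (n : ℕ) (f g : Cube n → ℝ)
    (hf : IsPWLQ f) (hg : IsPWLQ g) :
    memGen f g ↔ ∀ x : Cube n, f x = 0 → g x = 0 := by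
  refine ⟨fun hmem => (hmem _ (isIdealQ_setOf_zero_subset f) ⟨hf, fun _ => id⟩).2,
    fun hz J hJ hfJ => ?_⟩
  obtain ⟨m, hm⟩ := hf.exists_nat_le_mul hg hz
  exact hJ.2.2.1 _ (hJ.min_nsmul_mem hfJ m) g hg fun x => le_min (hm x) (hg.2.1 x).2
end
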